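/- log n ≤ (1/n²) ∑ i (-log p i) + ((n-1)/n²) ∑ i (-log q i), where q i = (1 - p i)/(n-1), assuming all p i ∈ (0,1). -/

import Mathlib

/-! Jensen's inequality for the concave `log`, applied to the `2n` numbers `p i` and
`q i = (1 - p i) / (n - 1)` with weights `1 / n²` and `(n - 1) / n²` respectively. The weights sum
to `1` and, since `∑ p = ∑ q = 1`, the weighted mean is `1 / n² + (n - 1) / n² = 1 / n`. -/

open Finset Real

theorem Real.sum_mul_log_le_log_sum_mul {ι : Type*} (s : Finset ι) (w z : ι → ℝ)
    (hw : ∀ i ∈ s, 0 ≤ w i) (hw' : ∑ i ∈ s, w i = 1) (hz : ∀ i ∈ s, 0 < z i) :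
    ∑ i ∈ s, w i * log (z i) ≤ log (∑ i ∈ s, w i * z i) :=
  strictConcaveOn_log_Ioi.concaveOn.le_map_sum hw hw' hz

theorem Real.mul_sum_log_add_mul_sum_log_le {ι : Type*} [Fintype ι] {a b : ℝ}
    (ha : 0 ≤ a) (hb : 0 ≤ b) (hab : (a + b) * Fintype.card ι = 1) {x y : ι → ℝ}
    (hx : ∀ i, 0 < x i) (hy : ∀ i, 0 < y i) :
    a * ∑ i, log (x i) + b * ∑ i, log (y i) ≤ log (a * ∑ i, x i + b * ∑ i, y i) := by
  have h := sum_mul_log_le_log_sum_mul univ (Sum.elim (fun _ ↦ a) fun _ ↦ b) (Sum.elim x y)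
    (by rintro (i | i) - <;> assumption)
    (by simp [Fintype.sum_sum_type]; linarith)
    (by rintro (i | i) - <;> simp [hx, hy])
  simpa only [Fintype.sum_sum_type, Sum.elim_inl, Sum.elim_inr, ← mul_sum] using h

theorem sum_one_sub_div_card_sub_one {ι : Type*} [Fintype ι] {p : ι → ℝ}
    (hp : ∑ i, p i = 1) (hcard : (Fintype.card ι : ℝ) ≠ 1) :
    ∑ i, (1 - p i) / ((Fintype.card ι : ℝ) - 1) = 1 := by
  rw [← sum_div, sum_sub_distrib, hp, sum_const, card_univ, nsmul_one]
  exact div_self (sub_ne_zero.mpr hcard)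

theorem log_n_le_sum_self_information
    (n : ℕ) (hn : 2 ≤ n) (p : Fin n → ℝ)
    (hp : ∀ i, 0 < p i ∧ p i < 1) (hsum : ∑ i, p i = 1) :
    Real.log n ≤
      (1 / (n : ℝ) ^ 2) * ∑ i, -Real.log (p i) +
        (((n : ℝ) - 1) / (n : ℝ) ^ 2) *
          ∑ i, -Real.log ((1 - p i) / ((n : ℝ) - 1)) := by
  have hn' : (2 : ℝ) ≤ n := by exact_mod_cast hn
  have hq : ∑ i, (1 - p i) / ((n : ℝ) - 1) = 1 := by
    simpa using sum_one_sub_div_card_sub_one hsum (by rw [Fintype.card_fin]; linarith)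
  have key := mul_sum_log_add_mul_sum_log_le (ι := Fin n) (a := 1 / (n : ℝ) ^ 2)
    (b := ((n : ℝ) - 1) / (n : ℝ) ^ 2) (x := p) (y := fun i ↦ (1 - p i) / ((n : ℝ) - 1))
    (by positivity) (div_nonneg (by linarith) (by positivity))
    (by rw [Fintype.card_fin]; field_simp; ring) (fun i ↦ (hp i).1)
    (fun i ↦ div_pos (sub_pos.mpr (hp i).2) (by linarith))
  have hmean : 1 / (n : ℝ) ^ 2 * ∑ i, p i + ((n : ℝ) - 1) / (n : ℝ) ^ 2 *
      ∑ i, (1 - p i) / ((n : ℝ) - 1) = (n : ℝ)⁻¹ := by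
    rw [hsum, hq]
    field_simp
    ring
  rw [hmean, log_inv] at key
  simp only [sum_neg_distrib]
  linarith
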